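/- Let C be the 4-dimensional k-algebra given as the quotient of the free associative k-algebra on generators f₁, f₂, x, y by the relations f₁² = f₁, f₂² = f₂, f₁f₂ = f₂f₁ = 0, f₁ + f₂ = 1, x = f₂xf₁, y = f₁yf₂, xy = 0, yx = 0 (the path algebra of the quiver with two vertices and arrows x : 1 → 2, y : 2 → 1 modulo the relations xy and yx). Then for e = e₁ + e₂ ∈ A₂ the corner algebra eA₂e is isomorphic to C as a k-algebra, and likewise for e = e₂ + e₃ ∈ A₂ the corner algebra eA₂e is isomorphic to C. -/

import Mathlib

/-! The gentle algebra `A₂` of Kalck's paper, defined by generators and relations. -/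

/-- Generators of the algebra `A₂`: three idempotents `e₁, e₂, e₃` and
arrows `β, γ : 3 → 1`, `α₂ : 1 → 2`, `α₁ : 2 → 3`. -/
inductive A2Gen : Type
  | e : Fin 3 → A2Gen
  | β : A2Gen
  | γ : A2Gen
  | α₁ : A2Gen
  | α₂ : A2Gen
  deriving DecidableEq

variable (k : Type*) [Field k]

open FreeAlgebra

/-- Defining relations of the algebra `A₂`. -/
inductive A2Rel : FreeAlgebra k A2Gen → FreeAlgebra k A2Gen → Prop
  | orth (i j : Fin 3) :
      A2Rel (ι k (A2Gen.e i) * ι k (A2Gen.e j)) (if i = j then ι k (A2Gen.e i) else 0)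
  | sum : A2Rel (ι k (A2Gen.e 0) + ι k (A2Gen.e 1) + ι k (A2Gen.e 2)) 1
  | beta : A2Rel (ι k (A2Gen.e 0) * ι k A2Gen.β * ι k (A2Gen.e 2)) (ι k A2Gen.β)
  | gamma : A2Rel (ι k (A2Gen.e 0) * ι k A2Gen.γ * ι k (A2Gen.e 2)) (ι k A2Gen.γ)
  | alpha₂ : A2Rel (ι k (A2Gen.e 1) * ι k A2Gen.α₂ * ι k (A2Gen.e 0)) (ι k A2Gen.α₂)
  | alpha₁ : A2Rel (ι k (A2Gen.e 2) * ι k A2Gen.α₁ * ι k (A2Gen.e 1)) (ι k A2Gen.α₁)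
  | rel₁ : A2Rel (ι k A2Gen.α₂ * ι k A2Gen.β) 0
  | rel₂ : A2Rel (ι k A2Gen.γ * ι k A2Gen.α₁) 0
  | rel₃ : A2Rel (ι k A2Gen.α₁ * ι k A2Gen.α₂) 0

/-- The gentle algebra `A₂ = kQ₂/I₂`. -/
abbrev A2 : Type _ := RingQuot (A2Rel k)

namespace A2

/-- The image of a generator in `A₂`. -/
def gen (g : A2Gen) : A2 k := RingQuot.mkAlgHom k (A2Rel k) (ι k g)

/-- The idempotent `eᵢ` of `A₂` (indexed by `i : Fin 3`, so `e₁ = ee 0` etc). -/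
def ee (i : Fin 3) : A2 k := gen k (A2Gen.e i)

/-- The algebra homomorphism `A₂ → k` corresponding to the one-dimensional simple
module `Sᵢ`: the idempotent `eᵢ` acts as the identity, all other generators act by zero. -/
noncomputable def φ (i : Fin 3) : A2 k →ₐ[k] k :=
  RingQuot.liftAlgHom k
    ⟨FreeAlgebra.lift k (fun g => if g = A2Gen.e i then (1 : k) else 0), by
      rintro x y h
      induction h with
      | orth i' j' =>
          simp only [map_mul, apply_ite, map_zero, FreeAlgebra.lift_ι_apply]
          by_cases hij : i' = j'
          · subst hij; by_cases h : i' = i <;> simp [h]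
          · by_cases h1 : i' = i <;> by_cases h2 : j' = i <;> simp_all
      | sum => fin_cases i <;> simp
      | _ => simp⟩

/-- The simple left `A₂`-module `Sᵢ` (a type synonym for `k`). -/
def S (_i : Fin 3) : Type _ := k

noncomputable instance (i : Fin 3) : AddCommGroup (S k i) :=
  inferInstanceAs (AddCommGroup k)

noncomputable instance (i : Fin 3) : Module k (S k i) := inferInstanceAs (Module k k)

noncomputable instance (i : Fin 3) : Module (A2 k) (S k i) :=
  Module.compHom k (φ k i).toRingHom

end A2

namespace A2

variable {K : Type*} [Field K]

lemma rel_eq {x y : FreeAlgebra K A2Gen} (h : A2Rel K x y) :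
    RingQuot.mkAlgHom K (A2Rel K) x = RingQuot.mkAlgHom K (A2Rel K) y :=
  RingQuot.mkAlgHom_rel K h

lemma ee_mul_ee (i j : Fin 3) : ee K i * ee K j = if i = j then ee K i else 0 := by
  have := rel_eq (A2Rel.orth (k := K) i j)
  simpa [gen, ee, apply_ite, map_mul] using this

lemma idem_ee_add_ee {i j : Fin 3} (hij : i ≠ j) :
    (ee K i + ee K j) * (ee K i + ee K j) = ee K i + ee K j := by
  simp [mul_add, add_mul, ee_mul_ee, hij, hij.symm]

end A2

/-! The corner ring `eAe` of a ring `A` at an idempotent `e`: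
the set `{eae : a ∈ A}`, with operations induced from `A` and unit `e`. -/

/-- An idempotent element of a ring, bundled with the proof of idempotency. -/
structure Idem (A : Type*) [Ring A] where
  /-- the underlying element -/
  e : A
  /-- idempotency -/
  idem : e * e = e

variable {A : Type*} [Ring A]

/-- The corner `eAe` of the ring `A` at the idempotent `e`, as a type:
its elements are the `x : A` with `e * x * e = x`, i.e. exactly the elements
of the subset `eAe ⊆ A`. -/
def Corner (E : Idem A) : Type _ := {x : A // E.e * x * E.e = x}

namespace Corner

variable {E : Idem A}

instance : Add (Corner E) :=
  ⟨fun x y => ⟨x.1 + y.1, by rw [mul_add, add_mul, x.2, y.2]⟩⟩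

instance : Zero (Corner E) := ⟨⟨0, by simp⟩⟩

instance : Neg (Corner E) :=
  ⟨fun x => ⟨-x.1, by rw [mul_neg, neg_mul, x.2]⟩⟩

instance : Sub (Corner E) :=
  ⟨fun x y => ⟨x.1 - y.1, by rw [mul_sub, sub_mul, x.2, y.2]⟩⟩

instance : SMul ℕ (Corner E) :=
  ⟨fun n x => ⟨n • x.1, by rw [mul_smul_comm, smul_mul_assoc, x.2]⟩⟩

instance : SMul ℤ (Corner E) :=
  ⟨fun n x => ⟨n • x.1, by rw [mul_smul_comm, smul_mul_assoc, x.2]⟩⟩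

private lemma aux_left {e x : A} (he : e * e = e) (hx : e * x * e = x) : e * x = x := by
  conv_lhs => rw [← hx]
  rw [← mul_assoc, ← mul_assoc, he, hx]

private lemma aux_right {e x : A} (he : e * e = e) (hx : e * x * e = x) : x * e = x := by
  conv_lhs => rw [← hx]
  rw [mul_assoc, he, hx]

instance : Mul (Corner E) :=
  ⟨fun x y => ⟨x.1 * y.1, by
    rw [← mul_assoc, aux_left E.idem x.2, mul_assoc, aux_right E.idem y.2]⟩⟩

instance : One (Corner E) := ⟨⟨E.e, by rw [E.idem, E.idem]⟩⟩

instance : AddCommGroup (Corner E) :=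
  Function.Injective.addCommGroup (fun x : Corner E => x.1) Subtype.val_injective
    rfl (fun _ _ => rfl) (fun _ => rfl) (fun _ _ => rfl) (fun _ _ => rfl) (fun _ _ => rfl)

lemma e_mul_val (x : Corner E) : E.e * x.1 = x.1 := aux_left E.idem x.2

lemma val_mul_e (x : Corner E) : x.1 * E.e = x.1 := aux_right E.idem x.2

instance : Ring (Corner E) where
  __ := (inferInstance : AddCommGroup (Corner E))
  mul := (· * ·)
  one := 1
  mul_assoc x y z := Subtype.ext (mul_assoc x.1 y.1 z.1)
  one_mul x := Subtype.ext (e_mul_val x)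
  mul_one x := Subtype.ext (val_mul_e x)
  left_distrib x y z := Subtype.ext (mul_add x.1 y.1 z.1)
  right_distrib x y z := Subtype.ext (add_mul x.1 y.1 z.1)
  zero_mul x := Subtype.ext (zero_mul x.1)
  mul_zero x := Subtype.ext (mul_zero x.1)

section Algebra

variable {k : Type*} [CommSemiring k] [Algebra k A]

instance : SMul k (Corner E) :=
  ⟨fun c x => ⟨c • x.1, by rw [mul_smul_comm, smul_mul_assoc, x.2]⟩⟩

instance : Module k (Corner E) :=
  Function.Injective.module k
    ⟨⟨fun x : Corner E => x.1, rfl⟩, fun _ _ => rfl⟩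
    Subtype.val_injective (fun _ _ => rfl)

instance : Algebra k (Corner E) :=
  Algebra.ofModule
    (fun c x y => Subtype.ext (smul_mul_assoc c x.1 y.1))
    (fun c x y => Subtype.ext (mul_smul_comm c x.1 y.1))

end Algebra

end Corner

open FreeAlgebra

/-- Generators of the algebra `C`: two idempotents `f₁, f₂` and arrows
`x : 1 → 2`, `y : 2 → 1`. -/
inductive CGen : Type
  | f : Fin 2 → CGen
  | x : CGen
  | y : CGen
  deriving DecidableEq

/-- Defining relations of the algebra `C`: `f₁, f₂` are orthogonal idempotents with
`f₁ + f₂ = 1`, `x = f₂xf₁`, `y = f₁yf₂`, and `xy = 0`, `yx = 0`. -/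
inductive CRel : FreeAlgebra k CGen → FreeAlgebra k CGen → Prop
  | orth (i j : Fin 2) :
      CRel (ι k (CGen.f i) * ι k (CGen.f j)) (if i = j then ι k (CGen.f i) else 0)
  | sum : CRel (ι k (CGen.f 0) + ι k (CGen.f 1)) 1
  | hx : CRel (ι k (CGen.f 1) * ι k CGen.x * ι k (CGen.f 0)) (ι k CGen.x)
  | hy : CRel (ι k (CGen.f 0) * ι k CGen.y * ι k (CGen.f 1)) (ι k CGen.y)
  | hxy : CRel (ι k CGen.x * ι k CGen.y) 0
  | hyx : CRel (ι k CGen.y * ι k CGen.x) 0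

/-- The 4-dimensional algebra `C`: the path algebra of the quiver with two vertices
and arrows `x : 1 → 2`, `y : 2 → 1`, modulo the relations `xy` and `yx`. -/
abbrev Calg : Type _ := RingQuot (CRel k)

/-- The idempotent `e = e₁ + e₂` of `A₂`, bundled with its idempotency. -/
noncomputable def A2.E12 : Idem (A2 k) :=
  ⟨A2.ee k 0 + A2.ee k 1, A2.idem_ee_add_ee (Fin.ne_of_val_ne (by simp))⟩

/-- The idempotent `e = e₂ + e₃` of `A₂`, bundled with its idempotency. -/
noncomputable def A2.E23 : Idem (A2 k) :=
  ⟨A2.ee k 1 + A2.ee k 2, A2.idem_ee_add_ee (Fin.ne_of_val_ne (by simp))⟩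

/-!
The corner at `e = eᵢ + eⱼ` is the sum of the four Peirce blocks `e_a A₂ e_b` with
`a, b ∈ {i, j}`, and `e_a A₂ e_b` is spanned by the paths from `b` to `a` that survive in `A₂`.
For both idempotents each of these blocks contains exactly one such path: `eᵢ`, `eⱼ`, and one path
in each direction (`α₂` and `βα₁`, resp. `α₁` and `α₂γ`). These four paths satisfy the relations
of `C`, and none of them vanishes, as the thin representations of the strings `βα₁` and `α₂γ`
show. So the map `C → eA₂e` sending `f₁, f₂, x, y` to them is injective (each block is a line) and
surjective.
-/

theorem Submodule.span_eq_top_of_mul_mem {R B : Type*} [CommSemiring R] [Semiring B]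
    [Algebra R B] {s T : Set B} (hs : Algebra.adjoin R s = ⊤) (one_mem : (1 : B) ∈ span R T)
    (mul_mem : ∀ x ∈ s, ∀ t ∈ T, x * t ∈ span R T) : span R T = ⊤ := by
  have mul_mem_span (x : B) (hx : x ∈ s) (v : B) (hv : v ∈ span R T) : x * v ∈ span R T := by
    induction hv using span_induction with
    | mem t ht => exact mul_mem x hx t ht
    | zero => simp
    | add v w _ _ hv hw => rw [mul_add]; exact add_mem hv hw
    | smul r v _ hv => rw [mul_smul_comm]; exact smul_mem _ r hv
  have key (b : B) (hb : b ∈ Algebra.adjoin R s) : ∀ v ∈ span R T, b * v ∈ span R T := by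
    induction hb using Algebra.adjoin_induction with
    | mem x hx => exact mul_mem_span x hx
    | algebraMap r =>
      intro v hv
      rw [Algebra.algebraMap_eq_smul_one, smul_one_mul]
      exact smul_mem _ r hv
    | add x y _ _ hx hy => intro v hv; rw [add_mul]; exact add_mem (hx v hv) (hy v hv)
    | mul x y _ _ hx hy => intro v hv; rw [mul_assoc]; exact hx _ (hy v hv)
  refine eq_top_iff.2 fun b _ => ?_
  simpa using key b (hs ▸ Algebra.mem_top) 1 one_mem

theorem RingQuot.adjoin_range_mkAlgHom_ι {R X : Type*} [CommSemiring R]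
    (r : FreeAlgebra R X → FreeAlgebra R X → Prop) :
    Algebra.adjoin R (Set.range (RingQuot.mkAlgHom R r ∘ FreeAlgebra.ι R)) = ⊤ := by
  rw [Set.range_comp, Algebra.adjoin_image, FreeAlgebra.adjoin_range_ι, Algebra.map_top,
    AlgHom.range_eq_top]
  exact RingQuot.mkAlgHom_surjective R r

theorem Matrix.single_eq_zero_iff {m n α : Type*} [DecidableEq m] [DecidableEq n] [Zero α]
    (i : m) (j : n) (c : α) : Matrix.single i j c = 0 ↔ c = 0 :=
  ⟨fun h => by simpa using congrFun (congrFun h i) j, fun h => h ▸ Matrix.single_zero i j⟩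

/-- `u, v, p, q` satisfy the defining relations of `C` for `f₁, f₂, x, y`, with `f₁ + f₂ = 1`
dropped: it holds in the corner at `u + v`. -/
structure IsCQuadruple (u v p q : A) : Prop where
  u_mul_u : u * u = u
  v_mul_v : v * v = v
  u_mul_v : u * v = 0
  v_mul_u : v * u = 0
  v_mul_p_mul_u : v * p * u = p
  u_mul_q_mul_v : u * q * v = q
  p_mul_q : p * q = 0
  q_mul_p : q * p = 0

namespace IsCQuadruple

variable {u v p q : A}

theorem mul_table (h : IsCQuadruple u v p q) :
    u * u = u ∧ u * v = 0 ∧ u * p = 0 ∧ u * q = q ∧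
    v * u = 0 ∧ v * v = v ∧ v * p = p ∧ v * q = 0 ∧
    p * u = p ∧ p * v = 0 ∧ p * p = 0 ∧ p * q = 0 ∧
    q * u = 0 ∧ q * v = q ∧ q * p = 0 ∧ q * q = 0 := by
  have pu : p * u = p := by
    conv_lhs => rw [← h.v_mul_p_mul_u]
    rw [mul_assoc, h.u_mul_u, h.v_mul_p_mul_u]
  have vp : v * p = p := by
    conv_lhs => rw [← h.v_mul_p_mul_u]
    rw [← mul_assoc, ← mul_assoc, h.v_mul_v, h.v_mul_p_mul_u]
  have qv : q * v = q := by
    conv_lhs => rw [← h.u_mul_q_mul_v]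
    rw [mul_assoc, h.v_mul_v, h.u_mul_q_mul_v]
  have uq : u * q = q := by
    conv_lhs => rw [← h.u_mul_q_mul_v]
    rw [← mul_assoc, ← mul_assoc, h.u_mul_u, h.u_mul_q_mul_v]
  refine ⟨h.u_mul_u, h.u_mul_v, ?_, uq, h.v_mul_u, h.v_mul_v, vp, ?_, pu, ?_, ?_, h.p_mul_q,
    ?_, qv, h.q_mul_p, ?_⟩
  · rw [← vp, ← mul_assoc, h.u_mul_v, zero_mul]
  · rw [← uq, ← mul_assoc, h.v_mul_u, zero_mul]
  · rw [← pu, mul_assoc, h.u_mul_v, mul_zero]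
  · calc p * p = p * u * (v * p) := by rw [pu, vp]
      _ = 0 := by rw [mul_assoc, ← mul_assoc u, h.u_mul_v, zero_mul, mul_zero]
  · rw [← qv, mul_assoc, h.v_mul_u, mul_zero]
  · calc q * q = q * v * (u * q) := by rw [qv, uq]
      _ = 0 := by rw [mul_assoc, ← mul_assoc v, h.v_mul_u, zero_mul, mul_zero]

theorem mul_mem_span {R : Type*} [CommSemiring R] [Module R A] (h : IsCQuadruple u v p q)
    {a b : A} (ha : a ∈ ({u, v, p, q} : Set A)) (hb : b ∈ ({u, v, p, q} : Set A)) :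
    a * b ∈ Submodule.span R {u, v, p, q} := by
  have mem : ∀ x ∈ ({u, v, p, q} : Set A), x ∈ Submodule.span R {u, v, p, q} :=
    fun x hx => Submodule.subset_span hx
  simp only [Set.mem_insert_iff, Set.mem_singleton_iff] at ha hb
  rcases ha with rfl | rfl | rfl | rfl <;> rcases hb with rfl | rfl | rfl | rfl <;>
    simp [h.mul_table, mem]

variable {k}

theorem eq_zero_of_smul_add_eq_zero [Algebra k A] (h : IsCQuadruple u v p q) (hu : u ≠ 0)
    (hv : v ≠ 0) (hp : p ≠ 0) (hq : q ≠ 0) {a b c d : k}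
    (habcd : a • u + b • v + c • p + d • q = 0) : a = 0 ∧ b = 0 ∧ c = 0 ∧ d = 0 := by
  have huu := congrArg (u * · * u) habcd
  have hvv := congrArg (v * · * v) habcd
  have hvu := congrArg (v * · * u) habcd
  have huv := congrArg (u * · * v) habcd
  simp only [mul_add, add_mul, mul_smul_comm, smul_mul_assoc, h.mul_table, smul_zero,
    mul_zero, zero_mul, add_zero, zero_add] at huu hvv hvu huv
  exact ⟨(smul_eq_zero.1 huu).resolve_right hu, (smul_eq_zero.1 hvv).resolve_right hv,
    (smul_eq_zero.1 hvu).resolve_right hp, (smul_eq_zero.1 huv).resolve_right hq⟩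

end IsCQuadruple

namespace Calg

variable {k}

noncomputable def f (i : Fin 2) : Calg k := RingQuot.mkAlgHom k (CRel k) (ι k (CGen.f i))

noncomputable def x : Calg k := RingQuot.mkAlgHom k (CRel k) (ι k CGen.x)

noncomputable def y : Calg k := RingQuot.mkAlgHom k (CRel k) (ι k CGen.y)

theorem f_zero_add_f_one : f 0 + f 1 = (1 : Calg k) := by
  simpa [f] using RingQuot.mkAlgHom_rel k (CRel.sum (k := k))

theorem isCQuadruple : IsCQuadruple (f 0 : Calg k) (f 1) x y := by
  have rel {a b} (h : CRel k a b) := RingQuot.mkAlgHom_rel k h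
  have orth (i j : Fin 2) := rel (CRel.orth i j)
  simp only [map_mul, apply_ite, map_zero] at orth
  exact ⟨by simpa [f] using orth 0 0, by simpa [f] using orth 1 1, by simpa [f] using orth 0 1,
    by simpa [f] using orth 1 0, by simpa [f, x] using rel CRel.hx,
    by simpa [f, y] using rel CRel.hy, by simpa [x, y] using rel CRel.hxy,
    by simpa [x, y] using rel CRel.hyx⟩

theorem span_eq_top : Submodule.span k {f 0, f 1, x, y} = (⊤ : Submodule k (Calg k)) := by
  refine Submodule.span_eq_top_of_mul_mem (RingQuot.adjoin_range_mkAlgHom_ι _) ?_ ?_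
  · rw [← f_zero_add_f_one]
    exact add_mem (Submodule.subset_span (by simp)) (Submodule.subset_span (by simp))
  · rintro _ ⟨g, rfl⟩ t ht
    refine isCQuadruple.mul_mem_span ?_ ht
    rcases g with i | _ | _
    · fin_cases i <;> simp [f]
    · simp [x]
    · simp [y]

theorem exists_eq_smul_add (z : Calg k) :
    ∃ a b c d : k, a • (f 0 : Calg k) + b • f 1 + c • x + d • y = z := by
  have hz : z ∈ Submodule.span k {f 0, f 1, x, y} := by rw [span_eq_top]; trivial
  obtain ⟨a, w, hw, rfl⟩ := Submodule.mem_span_insert.1 hz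
  obtain ⟨b, c, d, rfl⟩ := Submodule.mem_span_triple.1 hw
  exact ⟨a, b, c, d, by abel⟩

end Calg

namespace Corner

variable {E : Idem A}

def of (x : A) (hx : E.e * x * E.e = x) : Corner E := ⟨x, hx⟩

@[simp] theorem val_of (x : A) (hx : E.e * x * E.e = x) : (of x hx : Corner E).1 = x := rfl

@[simp] theorem val_zero : (0 : Corner E).1 = 0 := rfl

@[simp] theorem val_one : (1 : Corner E).1 = E.e := rfl

@[simp] theorem val_add (a b : Corner E) : (a + b).1 = a.1 + b.1 := rfl

@[simp] theorem val_mul (a b : Corner E) : (a * b).1 = a.1 * b.1 := rfl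

@[simp] theorem val_smul {R : Type*} [CommSemiring R] [Algebra R A] (c : R) (a : Corner E) :
    (c • a).1 = c • a.1 := rfl

end Corner

namespace IsCQuadruple

variable {k} [Algebra k A] {E : Idem A} {u v p q : A}

theorem mul_mul_eq_of_mem (h : IsCQuadruple u v p q) (hE : E.e = u + v) {w : A}
    (hw : w ∈ ({u, v, p, q} : Set A)) : E.e * w * E.e = w := by
  simp only [Set.mem_insert_iff, Set.mem_singleton_iff] at hw
  rcases hw with rfl | rfl | rfl | rfl <;> simp [hE, mul_add, add_mul, h.mul_table]

noncomputable def cornerGen (h : IsCQuadruple u v p q) (hE : E.e = u + v) : CGen → Corner E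
  | .f i => .of (![u, v] i) (h.mul_mul_eq_of_mem hE (by fin_cases i <;> simp))
  | .x => .of p (h.mul_mul_eq_of_mem hE (by simp))
  | .y => .of q (h.mul_mul_eq_of_mem hE (by simp))

variable (k) in
noncomputable def liftCorner (h : IsCQuadruple u v p q) (hE : E.e = u + v) :
    Calg k →ₐ[k] Corner E :=
  RingQuot.liftAlgHom k ⟨FreeAlgebra.lift k (h.cornerGen hE), by
    rintro _ _ r
    induction r with
    | orth i j =>
      fin_cases i <;> fin_cases j <;> apply Subtype.ext <;> simp [cornerGen, h.mul_table]
    | sum => apply Subtype.ext; simp [cornerGen, hE]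
    | _ => apply Subtype.ext; simp [cornerGen, h.mul_table]⟩

theorem val_liftCorner_smul_add (h : IsCQuadruple u v p q) (hE : E.e = u + v) (a b c d : k) :
    (h.liftCorner k hE (a • (Calg.f 0 : Calg k) + b • Calg.f 1 + c • Calg.x + d • Calg.y)).1 =
      a • u + b • v + c • p + d • q := by
  simp [liftCorner, Calg.f, Calg.x, Calg.y, cornerGen]

theorem liftCorner_injective (h : IsCQuadruple u v p q) (hE : E.e = u + v) (hu : u ≠ 0)
    (hv : v ≠ 0) (hp : p ≠ 0) (hq : q ≠ 0) : Function.Injective (h.liftCorner k hE) := by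
  refine (injective_iff_map_eq_zero _).2 fun z hz => ?_
  obtain ⟨a, b, c, d, rfl⟩ := Calg.exists_eq_smul_add z
  have habcd := congrArg Subtype.val hz
  rw [val_liftCorner_smul_add, Corner.val_zero] at habcd
  obtain ⟨rfl, rfl, rfl, rfl⟩ := h.eq_zero_of_smul_add_eq_zero hu hv hp hq habcd
  simp

theorem liftCorner_surjective (h : IsCQuadruple u v p q) (hE : E.e = u + v)
    (huu : ∀ a, u * a * u ∈ k ∙ u) (hvv : ∀ a, v * a * v ∈ k ∙ v)
    (hvu : ∀ a, v * a * u ∈ k ∙ p) (huv : ∀ a, u * a * v ∈ k ∙ q) :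
    Function.Surjective (h.liftCorner k hE) := by
  rintro ⟨w, hw⟩
  obtain ⟨a, ha⟩ := Submodule.mem_span_singleton.1 (huu w)
  obtain ⟨b, hb⟩ := Submodule.mem_span_singleton.1 (hvv w)
  obtain ⟨c, hc⟩ := Submodule.mem_span_singleton.1 (hvu w)
  obtain ⟨d, hd⟩ := Submodule.mem_span_singleton.1 (huv w)
  refine ⟨a • (Calg.f 0 : Calg k) + b • Calg.f 1 + c • Calg.x + d • Calg.y, Subtype.ext ?_⟩
  change _ = w
  rw [val_liftCorner_smul_add, ha, hb, hc, hd]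
  rw [hE] at hw
  conv_rhs => rw [← hw]
  noncomm_ring

theorem nonempty_corner_algEquiv (h : IsCQuadruple u v p q) (hE : E.e = u + v) (hu : u ≠ 0)
    (hv : v ≠ 0) (hp : p ≠ 0) (hq : q ≠ 0)
    (huu : ∀ a, u * a * u ∈ k ∙ u) (hvv : ∀ a, v * a * v ∈ k ∙ v)
    (hvu : ∀ a, v * a * u ∈ k ∙ p) (huv : ∀ a, u * a * v ∈ k ∙ q) :
    Nonempty (Corner E ≃ₐ[k] Calg k) :=
  ⟨(AlgEquiv.ofBijective (h.liftCorner k hE) ⟨h.liftCorner_injective hE hu hv hp hq,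
    h.liftCorner_surjective hE huu hvv hvu huv⟩).symm⟩

end IsCQuadruple

namespace A2Gen

def src : A2Gen → Fin 3
  | e i => i
  | β => 2
  | γ => 2
  | α₁ => 1
  | α₂ => 0

def tgt : A2Gen → Fin 3
  | e i => i
  | β => 0
  | γ => 0
  | α₁ => 2
  | α₂ => 1

end A2Gen

namespace A2

/-- The paths of `Q₂` that do not lie in `I₂`: the vertices, the arrows, `βα₁` and `α₂γ`. -/
inductive Path
  | ofGen (g : A2Gen)
  | βα₁
  | α₂γ

namespace Path

def src : Path → Fin 3
  | ofGen g => g.src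
  | βα₁ => 1
  | α₂γ => 2

def tgt : Path → Fin 3
  | ofGen g => g.tgt
  | βα₁ => 0
  | α₂γ => 1

noncomputable def toA2 : Path → A2 k
  | ofGen g => gen k g
  | βα₁ => gen k .β * gen k .α₁
  | α₂γ => gen k .α₂ * gen k .γ

theorem eq_ofGen_e_of_tgt_eq_src (p : Path) (h : p.tgt = p.src) : p = .ofGen (.e p.src) := by
  rcases p with ⟨i | _ | _ | _ | _⟩ | _ | _ <;> simp_all [tgt, src, A2Gen.tgt, A2Gen.src]

end Path

variable {k}

theorem ee_mul_eq_ite {x : A2 k} {t s : Fin 3} (hx : ee k t * x * ee k s = x) (i : Fin 3) :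
    ee k i * x = if i = t then x else 0 := by
  conv_lhs => rw [← hx]
  rw [← mul_assoc, ← mul_assoc, ee_mul_ee]
  split_ifs with hi
  · subst hi; exact hx
  · simp

theorem mul_ee_eq_ite {x : A2 k} {t s : Fin 3} (hx : ee k t * x * ee k s = x) (j : Fin 3) :
    x * ee k j = if j = s then x else 0 := by
  conv_lhs => rw [← hx]
  rw [mul_assoc, ee_mul_ee]
  by_cases hj : j = s
  · subst hj; simp [hx]
  · simp [hj, Ne.symm hj]

theorem ee_mul_mul_ee_eq_ite {x : A2 k} {t s : Fin 3} (hx : ee k t * x * ee k s = x)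
    (i j : Fin 3) : ee k i * x * ee k j = if i = t ∧ j = s then x else 0 := by
  rw [ee_mul_eq_ite hx, ite_mul, zero_mul, mul_ee_eq_ite hx]
  by_cases hi : i = t <;> by_cases hj : j = s <;> simp [hi, hj]

theorem mul_eq_zero_of_ne {x y : A2 k} {t s t' s' : Fin 3} (hx : ee k t * x * ee k s = x)
    (hy : ee k t' * y * ee k s' = y) (hst : s ≠ t') : x * y = 0 := by
  have hxs : x * ee k s = x := by rw [mul_ee_eq_ite hx, if_pos rfl]
  have hsy : ee k s * y = 0 := by rw [ee_mul_eq_ite hy, if_neg hst]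
  rw [← hxs, mul_assoc, hsy, mul_zero]

theorem ee_tgt_mul_gen_mul_ee_src (g : A2Gen) : ee k g.tgt * gen k g * ee k g.src = gen k g := by
  have rel {a b} (h : A2Rel k a b) := rel_eq h
  cases g with
  | e i => show ee k i * ee k i * ee k i = ee k i; simp [ee_mul_ee]
  | β => simpa [gen, ee, A2Gen.tgt, A2Gen.src] using rel A2Rel.beta
  | γ => simpa [gen, ee, A2Gen.tgt, A2Gen.src] using rel A2Rel.gamma
  | α₁ => simpa [gen, ee, A2Gen.tgt, A2Gen.src] using rel A2Rel.alpha₁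
  | α₂ => simpa [gen, ee, A2Gen.tgt, A2Gen.src] using rel A2Rel.alpha₂

theorem gen_α₂_mul_gen_β : gen k .α₂ * gen k .β = 0 := by
  simpa only [gen, map_mul, map_zero] using rel_eq (A2Rel.rel₁ (k := k))

theorem gen_γ_mul_gen_α₁ : gen k .γ * gen k .α₁ = 0 := by
  simpa only [gen, map_mul, map_zero] using rel_eq (A2Rel.rel₂ (k := k))

theorem gen_α₁_mul_gen_α₂ : gen k .α₁ * gen k .α₂ = 0 := by
  simpa only [gen, map_mul, map_zero] using rel_eq (A2Rel.rel₃ (k := k))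

theorem ee_add_ee_add_ee : ee k 0 + ee k 1 + ee k 2 = 1 := by
  simpa [gen, ee] using rel_eq (A2Rel.sum (k := k))

theorem ee_mul_mul_mul_ee {x y : A2 k} {t m s : Fin 3} (hx : ee k t * x * ee k m = x)
    (hy : ee k m * y * ee k s = y) : ee k t * (x * y) * ee k s = x * y := by
  rw [← mul_assoc, ee_mul_eq_ite hx, if_pos rfl, mul_assoc, mul_ee_eq_ite hy, if_pos rfl]

theorem ee_tgt_mul_toA2_mul_ee_src (p : Path) :
    ee k p.tgt * p.toA2 k * ee k p.src = p.toA2 k := by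
  cases p with
  | ofGen g => exact ee_tgt_mul_gen_mul_ee_src g
  | βα₁ => exact ee_mul_mul_mul_ee (ee_tgt_mul_gen_mul_ee_src .β) (ee_tgt_mul_gen_mul_ee_src .α₁)
  | α₂γ => exact ee_mul_mul_mul_ee (ee_tgt_mul_gen_mul_ee_src .α₂) (ee_tgt_mul_gen_mul_ee_src .γ)

theorem gen_mul_gen_e (g : A2Gen) (j : Fin 3) :
    gen k g * gen k (.e j) = if j = g.src then gen k g else 0 :=
  mul_ee_eq_ite (ee_tgt_mul_gen_mul_ee_src g) j

theorem gen_mul_toA2_mem_span (g : A2Gen) (p : Path) :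
    gen k g * p.toA2 k ∈ Submodule.span k (Set.range (Path.toA2 k)) := by
  set S := Submodule.span k (Set.range (Path.toA2 k))
  have mem (q : Path) : q.toA2 k ∈ S := Submodule.subset_span ⟨q, rfl⟩
  have mem_gen (g : A2Gen) : gen k g ∈ S := mem (.ofGen g)
  have mem_βα₁ : gen k .β * gen k .α₁ ∈ S := mem .βα₁
  have mem_α₂γ : gen k .α₂ * gen k .γ ∈ S := mem .α₂γ
  by_cases hgp : g.src = p.tgt
  swap
  · rw [mul_eq_zero_of_ne (ee_tgt_mul_gen_mul_ee_src g) (ee_tgt_mul_toA2_mul_ee_src p) hgp]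
    exact zero_mem _
  rcases g with i | _ | _ | _ | _
  · rw [show gen k (.e i) = ee k i from rfl, ee_mul_eq_ite (ee_tgt_mul_toA2_mul_ee_src p),
      if_pos (show i = p.tgt from hgp)]
    exact mem p
  all_goals
    rcases p with ⟨j | _ | _ | _ | _⟩ | _ | _ <;> revert hgp <;>
      simp +contextual [A2Gen.src, A2Gen.tgt, Path.tgt, Path.toA2, gen_mul_gen_e, ← mul_assoc,
        gen_α₂_mul_gen_β, gen_γ_mul_gen_α₁, gen_α₁_mul_gen_α₂, mem_gen, mem_βα₁, mem_α₂γ]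

theorem span_range_toA2 : Submodule.span k (Set.range (Path.toA2 k)) = ⊤ := by
  refine Submodule.span_eq_top_of_mul_mem (RingQuot.adjoin_range_mkAlgHom_ι _) ?_ ?_
  · have mem (i : Fin 3) : ee k i ∈ Submodule.span k (Set.range (Path.toA2 k)) :=
      Submodule.subset_span ⟨.ofGen (.e i), rfl⟩
    rw [← ee_add_ee_add_ee]
    exact add_mem (add_mem (mem 0) (mem 1)) (mem 2)
  · rintro _ ⟨g, rfl⟩ _ ⟨p, rfl⟩
    exact gen_mul_toA2_mem_span g p

theorem ee_mul_mul_ee_mem_span_singleton {i j : Fin 3} (P : Path)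
    (hP : ∀ p : Path, p.tgt = i → p.src = j → p = P) (a : A2 k) :
    ee k i * a * ee k j ∈ k ∙ P.toA2 k := by
  have ha : a ∈ Submodule.span k (Set.range (Path.toA2 k)) := by rw [span_range_toA2]; trivial
  induction ha using Submodule.span_induction with
  | mem x hx =>
    obtain ⟨p, rfl⟩ := hx
    rw [ee_mul_mul_ee_eq_ite (ee_tgt_mul_toA2_mul_ee_src p)]
    split_ifs with h
    · rw [hP p h.1.symm h.2.symm]
      exact Submodule.mem_span_singleton_self _
    · exact zero_mem _
  | zero => simp
  | add x y _ _ hx hy => rw [mul_add, add_mul]; exact add_mem hx hy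
  | smul c x _ hx => rw [mul_smul_comm, smul_mul_assoc]; exact Submodule.smul_mem _ c hx

noncomputable def thinRep (c : A2Gen → k) (hc : ∀ i, c (.e i) = 1) (h₁ : c .α₂ * c .β = 0)
    (h₂ : c .γ * c .α₁ = 0) (h₃ : c .α₁ * c .α₂ = 0) : A2 k →ₐ[k] Matrix (Fin 3) (Fin 3) k :=
  RingQuot.liftAlgHom k ⟨FreeAlgebra.lift k fun g => Matrix.single g.tgt g.src (c g), by
    rintro _ _ r
    induction r with
    | orth i j => by_cases hij : i = j <;> simp [hij, hc, A2Gen.src, A2Gen.tgt]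
    | sum =>
      ext a b
      fin_cases a <;> fin_cases b <;> simp [hc, A2Gen.src, A2Gen.tgt]
    | _ => simp [A2Gen.src, A2Gen.tgt, hc, h₁, h₂, h₃]⟩

theorem thinRep_gen (c : A2Gen → k) (hc : ∀ i, c (.e i) = 1) (h₁ : c .α₂ * c .β = 0)
    (h₂ : c .γ * c .α₁ = 0) (h₃ : c .α₁ * c .α₂ = 0) (g : A2Gen) :
    thinRep c hc h₁ h₂ h₃ (gen k g) = Matrix.single g.tgt g.src (c g) := by
  simp [thinRep, gen]

theorem toA2_ne_zero (p : Path) : p.toA2 k ≠ 0 := by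
  intro hp
  -- the string modules of `βα₁` and `α₂γ`; every path acts nontrivially on one of them
  have h₁ := congrArg (thinRep (fun g => if g = .α₂ ∨ g = .γ then 0 else 1)
    (by simp) (by simp) (by simp) (by simp)) hp
  have h₂ := congrArg (thinRep (fun g => if g = .β ∨ g = .α₁ then 0 else 1)
    (by simp) (by simp) (by simp) (by simp)) hp
  rcases p with ⟨i | _ | _ | _ | _⟩ | _ | _ <;>
    simp [Path.toA2, thinRep_gen, A2Gen.src, A2Gen.tgt, Matrix.single_eq_zero_iff] at h₁ h₂

theorem nonempty_corner_algEquiv {E : Idem (A2 k)} {i j : Fin 3} (hE : E.e = ee k i + ee k j)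
    (hij : i ≠ j) (p q : Path) (hp : p.tgt = j ∧ p.src = i) (hq : q.tgt = i ∧ q.src = j)
    (hpq : p.toA2 k * q.toA2 k = 0) (hqp : q.toA2 k * p.toA2 k = 0)
    (hp_unique : ∀ r : Path, r.tgt = j → r.src = i → r = p)
    (hq_unique : ∀ r : Path, r.tgt = i → r.src = j → r = q) :
    Nonempty (Corner E ≃ₐ[k] Calg k) := by
  have hquad : IsCQuadruple (ee k i) (ee k j) (p.toA2 k) (q.toA2 k) :=
    { u_mul_u := by simp [ee_mul_ee]
      v_mul_v := by simp [ee_mul_ee]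
      u_mul_v := by simp [ee_mul_ee, hij]
      v_mul_u := by simp [ee_mul_ee, hij.symm]
      v_mul_p_mul_u := hp.1 ▸ hp.2 ▸ ee_tgt_mul_toA2_mul_ee_src p
      u_mul_q_mul_v := hq.1 ▸ hq.2 ▸ ee_tgt_mul_toA2_mul_ee_src q
      p_mul_q := hpq
      q_mul_p := hqp }
  have loop_unique (l : Fin 3) (r : Path) (h₁ : r.tgt = l) (h₂ : r.src = l) : r = .ofGen (.e l) :=
    h₂ ▸ r.eq_ofGen_e_of_tgt_eq_src (h₁.trans h₂.symm)
  exact hquad.nonempty_corner_algEquiv hE (toA2_ne_zero (.ofGen (.e i)))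
    (toA2_ne_zero (.ofGen (.e j))) (toA2_ne_zero p) (toA2_ne_zero q)
    (ee_mul_mul_ee_mem_span_singleton (.ofGen (.e i)) (loop_unique i))
    (ee_mul_mul_ee_mem_span_singleton (.ofGen (.e j)) (loop_unique j))
    (ee_mul_mul_ee_mem_span_singleton p hp_unique) (ee_mul_mul_ee_mem_span_singleton q hq_unique)

end A2

/-- For `e = e₁ + e₂ ∈ A₂` the corner algebra `eA₂e` is isomorphic to
`C` as a `k`-algebra, and likewise for `e = e₂ + e₃ ∈ A₂`. -/
theorem stmt7 :
    Nonempty (Corner (A2.E12 k) ≃ₐ[k] Calg k) ∧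
    Nonempty (Corner (A2.E23 k) ≃ₐ[k] Calg k) := by
  open A2 in
  constructor
  · refine nonempty_corner_algEquiv rfl (by decide) (.ofGen .α₂) .βα₁ ⟨rfl, rfl⟩ ⟨rfl, rfl⟩
      ?_ ?_ ?_ ?_
    · simp [Path.toA2, ← mul_assoc, gen_α₂_mul_gen_β]
    · simp [Path.toA2, mul_assoc, gen_α₁_mul_gen_α₂]
    all_goals
      rintro (⟨l | _ | _ | _ | _⟩ | _ | _) <;>
        simp +contextual [Path.tgt, Path.src, A2Gen.tgt, A2Gen.src]
  · refine nonempty_corner_algEquiv rfl (by decide) (.ofGen .α₁) .α₂γ ⟨rfl, rfl⟩ ⟨rfl, rfl⟩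
      ?_ ?_ ?_ ?_
    · simp [Path.toA2, ← mul_assoc, gen_α₁_mul_gen_α₂]
    · simp [Path.toA2, mul_assoc, gen_γ_mul_gen_α₁]
    all_goals
      rintro (⟨l | _ | _ | _ | _⟩ | _ | _) <;>
        simp +contextual [Path.tgt, Path.src, A2Gen.tgt, A2Gen.src]
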